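/- Let 0 < α < 1 and β > 0, let φ be an analytic self-map of the open unit disk D, let g be analytic on D, and suppose the operator C_φU_g, defined by (C_φU_g f)(z) = ∫₀^{φ(z)} f(ξ) g'(ξ) dξ, is bounded from Z^α to Z^β. Then C_φU_g is a compact operator from Z^α to Z^β, i.e. its essential norm ‖C_φU_g‖_{e,Z^α→Z^β} equals 0. -/

import Mathlib

/-! Write `T = C_φ U_g`. On `D`, `T f = P ∘ φ - P 0` for a primitive `P` of `f g'`, so
`(T f)' = f(φ) g'(φ) φ'` and `(T f)'' = f'(φ) ((T id)'' - φ (T 1)'') + f(φ) (T 1)''`. Boundedness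
of `T` on the two test functions `1` and `id` therefore gives `‖T f‖_{Z^β} ≤ C S` whenever `|f|`
and `|f'|` are at most `S` on `D`. For `α < 1` the unit ball of `Z^α` is uniformly bounded in
`(f, f')` and equicontinuous on `D`: `f` is Lipschitz, and integrating `|f''(z)| ≤ (1 - |z|)^{-α}`
radially makes `f'` Hölder of exponent `1 - α`. By Arzelà–Ascoli every sequence in the ball has a
subsequence along which `f` and `f'` are uniformly Cauchy on `D`, so its images are Cauchy in
`Z^β`: `T` is compact, and its essential norm vanishes.
-/

noncomputable section

/-- The open unit disk in the complex plane. -/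
def uD : Set ℂ := Metric.ball 0 1

/-- The Zygmund-type quantity `(1-|z|^2)^a * |f''(z)|`. -/
def zygS (a : ℝ) (f : ℂ → ℂ) (z : ℂ) : ℝ := (1 - ‖z‖ ^ 2) ^ a * ‖deriv (deriv f) z‖

/-- Membership in the Zygmund-type space `Z^a`. -/
def memZ (a : ℝ) (f : ℂ → ℂ) : Prop :=
  AnalyticOn ℂ f uD ∧ ∃ M : ℝ, ∀ z ∈ uD, zygS a f z ≤ M

/-- The Zygmund-type norm `‖f‖_{Z^a} = |f 0| + |f' 0| + sup_{z ∈ D} (1-|z|^2)^a |f''(z)|`. -/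
def zNorm (a : ℝ) (f : ℂ → ℂ) : ℝ := ‖f 0‖ + ‖deriv f 0‖ + sSup (zygS a f '' uD)

/-- Membership in the weighted space `H^∞_{v_b}` (for `u` analytic on `uD`). -/
def memHv (b : ℝ) (u : ℂ → ℂ) : Prop :=
  ∃ M : ℝ, ∀ z ∈ uD, (1 - ‖z‖ ^ 2) ^ b * ‖u z‖ ≤ M

/-- `T` is a bounded operator from `Z^a` to `Z^b`. -/
def boundedOp (a b : ℝ) (T : (ℂ → ℂ) → ℂ → ℂ) : Prop :=
  (∀ f, memZ a f → memZ b (T f)) ∧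
    ∃ C > 0, ∀ f, memZ a f → zNorm b (T f) ≤ C * zNorm a f

/-- `(C_φ U_g f)(z) = ∫₀^{φ(z)} f(ξ) g'(ξ) dξ`, parametrized along the segment from `0` to `φ z`. -/
def CphiUg (g φ : ℂ → ℂ) (f : ℂ → ℂ) : ℂ → ℂ :=
  fun z => ∫ t in (0:ℝ)..1, φ z * (f ((t : ℂ) * φ z) * deriv g ((t : ℂ) * φ z))

/-- The weighted sup-quantity `‖u‖_{v_b} = sup_{z ∈ D} (1-|z|^2)^b |u(z)|`. -/
def vNorm (b : ℝ) (u : ℂ → ℂ) : ℝ := sSup ((fun z => (1 - ‖z‖ ^ 2) ^ b * ‖u z‖) '' uD)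

/-- Operator norm of `T` viewed as an operator from `Z^a` to `Z^b`. -/
def opNormZ (a b : ℝ) (T : (ℂ → ℂ) → ℂ → ℂ) : ℝ :=
  sSup {r : ℝ | ∃ f, memZ a f ∧ zNorm a f ≤ 1 ∧ r = zNorm b (T f)}

/-- `K` is a compact (linear) operator from `Z^a` to `Z^b`: it is linear on `Z^a`, maps `Z^a`
into `Z^b`, and every sequence in the closed unit ball of `Z^a` has a subsequence whose image
under `K` is Cauchy in the `Z^b`-norm (equivalently, the image of the unit ball is relatively
compact since `Z^b` is a Banach space). -/
def compactOpZ (a b : ℝ) (K : (ℂ → ℂ) → ℂ → ℂ) : Prop :=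
  (∀ f, memZ a f → memZ b (K f)) ∧
  (∀ f h, memZ a f → memZ a h → K (f + h) = K f + K h) ∧
  (∀ (c : ℂ) (f), memZ a f → K (c • f) = c • K f) ∧
  ∀ u : ℕ → ℂ → ℂ, (∀ n, memZ a (u n) ∧ zNorm a (u n) ≤ 1) →
    ∃ σ : ℕ → ℕ, StrictMono σ ∧
      ∀ ε > 0, ∃ N, ∀ m ≥ N, ∀ n ≥ N,
        zNorm b (fun z => K (u (σ m)) z - K (u (σ n)) z) ≤ ε

/-- The essential norm of `T : Z^a → Z^b`: the distance from `T` to the compact operators. -/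
def essNormZ (a b : ℝ) (T : (ℂ → ℂ) → ℂ → ℂ) : ℝ :=
  sInf {r : ℝ | ∃ K, compactOpZ a b K ∧ r = opNormZ a b (fun f z => T f z - K f z)}

open Set Filter Topology Metric

theorem exists_strictMono_forall_cauchySeq {X E : Type*} [PseudoMetricSpace E] {D : Set X}
    (hD : D.Countable) {K : Set E} (hK : IsCompact K) {u : ℕ → X → E}
    (hu : ∀ n, ∀ x ∈ D, u n x ∈ K) :
    ∃ σ : ℕ → ℕ, StrictMono σ ∧ ∀ x ∈ D, CauchySeq fun n => u (σ n) x := by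
  have := hD.to_subtype
  obtain ⟨_, _, σ, hσ, hlim⟩ := (isCompact_univ_pi fun _ : D => hK).tendsto_subseq
    (x := fun n (x : D) => u n x) fun n => mem_univ_pi.2 fun x => hu n x x.2
  exact ⟨σ, hσ, fun x hx => (tendsto_pi_nhds.1 hlim ⟨x, hx⟩).cauchySeq⟩

theorem TotallyBounded.exists_strictMono_uniformCauchySeqOn {X E : Type*} [PseudoMetricSpace X]
    [PseudoMetricSpace E] {S : Set X} (hS : TotallyBounded S) {K : Set E} (hK : IsCompact K)
    {u : ℕ → X → E} (hu : ∀ n, ∀ x ∈ S, u n x ∈ K) {ω : ℝ → ℝ} (hω : Tendsto ω (𝓝 0) (𝓝 0))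
    (hmod : ∀ n, ∀ x ∈ S, ∀ y ∈ S, dist (u n x) (u n y) ≤ ω (dist x y)) :
    ∃ σ : ℕ → ℕ, StrictMono σ ∧ UniformCauchySeqOn (fun n => u (σ n)) atTop S := by
  choose t htS htfin hcover using fun k : ℕ =>
    finite_approx_of_totallyBounded hS (1 / (k + 1)) Nat.one_div_pos_of_nat
  obtain ⟨σ, hσ, hcauchy⟩ := exists_strictMono_forall_cauchySeq
    (countable_iUnion fun k => (htfin k).countable) hK
    (fun n x hx => hu n x (iUnion_subset htS hx))
  refine ⟨σ, hσ, Metric.uniformCauchySeqOn_iff.2 fun ε hε => ?_⟩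
  obtain ⟨δ, hδ, hωδ⟩ := tendsto_nhds_nhds.1 hω (ε / 3) (by positivity)
  obtain ⟨k, hk⟩ := exists_nat_one_div_lt hδ
  have hnet : ∀ᶠ N in atTop, ∀ y ∈ t k, ∀ m ≥ N, ∀ n ≥ N,
      dist (u (σ m) y) (u (σ n) y) < ε / 3 := by
    refine (eventually_all_finite (htfin k)).2 fun y hy => ?_
    obtain ⟨N, hN⟩ := Metric.cauchySeq_iff.1
      (hcauchy y (mem_iUnion_of_mem k hy)) (ε / 3) (by positivity)
    exact eventually_atTop.2 ⟨N, fun M hM m hm n hn => hN m (hM.trans hm) n (hM.trans hn)⟩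
  obtain ⟨N, hN⟩ := hnet.exists
  refine ⟨N, fun m hm n hn x hx => ?_⟩
  obtain ⟨y, hy, hxy⟩ := mem_iUnion₂.1 (hcover k hx)
  have hclose : ∀ i, dist (u i x) (u i y) < ε / 3 := fun i =>
    (hmod i x hx y (htS k hy)).trans_lt <| lt_of_abs_lt <| by
      simpa using hωδ (x := dist x y) (by simpa using (mem_ball.1 hxy).trans hk)
  calc dist (u (σ m) x) (u (σ n) x)
      ≤ dist (u (σ m) x) (u (σ m) y) + dist (u (σ m) y) (u (σ n) y)
        + dist (u (σ n) y) (u (σ n) x) := dist_triangle4 _ _ _ _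
    _ < ε / 3 + ε / 3 + ε / 3 := by
        gcongr
        · exact hclose _
        · exact hN y hy m hm n hn
        · rw [dist_comm]; exact hclose _
    _ = ε := by ring

lemma mem_uD_iff {z : ℂ} : z ∈ uD ↔ ‖z‖ < 1 := mem_ball_zero_iff

lemma isOpen_uD : IsOpen uD := isOpen_ball

lemma convex_uD : Convex ℝ uD := convex_ball 0 1

lemma zero_mem_uD : (0 : ℂ) ∈ uD := mem_ball_self one_pos

lemma ofReal_mul_mem_uD {t : ℝ} (ht0 : 0 ≤ t) (ht1 : t ≤ 1) {w : ℂ} (hw : w ∈ uD) :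
    (t : ℂ) * w ∈ uD := by
  rw [mem_uD_iff] at hw
  rw [mem_uD_iff, norm_mul, Complex.norm_of_nonneg ht0]
  nlinarith [norm_nonneg w]

lemma closedBall_subset_uD {r : ℝ} (hr : r < 1) : closedBall (0 : ℂ) r ⊆ uD :=
  closedBall_subset_ball hr

lemma one_sub_norm_sq_pos {z : ℂ} (hz : z ∈ uD) : 0 < 1 - ‖z‖ ^ 2 := by
  have := mem_uD_iff.1 hz
  nlinarith [norm_nonneg z]

lemma HasDerivAt.comp_ofReal_mul_const {F : ℂ → ℂ} {F' w : ℂ} {t : ℝ}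
    (hF : HasDerivAt F F' (t * w)) : HasDerivAt (fun s : ℝ => F (s * w)) (w * F') t := by
  simpa [mul_comm w] using (hF.comp (t : ℂ) ((hasDerivAt_id (t : ℂ)).mul_const w)).comp_ofReal

theorem norm_sub_ofReal_mul_le {α : ℝ} (hα0 : 0 ≤ α) (hα1 : α < 1) {F : ℂ → ℂ}
    (hF : DifferentiableOn ℂ F uD) (hF' : ∀ y ∈ uD, ‖deriv F y‖ ≤ (1 - ‖y‖) ^ (-α))
    {w : ℂ} (hw : w ∈ uD) {r : ℝ} (hr0 : 0 ≤ r) (hr1 : r ≤ 1) :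
    ‖F w - F (r * w)‖ ≤ (1 - r) ^ (1 - α) / (1 - α) := by
  have hα : 0 < 1 - α := by linarith
  have hmem : ∀ t ∈ Icc r 1, (t : ℂ) * w ∈ uD := fun t ht =>
    ofReal_mul_mem_uD (hr0.trans ht.1) ht.2 hw
  have hderiv : ∀ t ∈ Icc r 1,
      HasDerivAt (fun s : ℝ => F (s * w) - F (r * w)) (w * deriv F (t * w)) t := fun t ht =>
    ((hF.hasDerivAt (isOpen_uD.mem_nhds (hmem t ht))).comp_ofReal_mul_const).sub_const _
  -- the comparison function `B` is the integral of `(1 - s) ^ (-α)` from `r` to `t`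
  have hB : ∀ t ∈ Ico r 1, HasDerivAt (fun t => ((1 - r) ^ (1 - α) - (1 - t) ^ (1 - α)) / (1 - α))
      ((1 - t) ^ (-α)) t := fun t ht => by
    have hpos : 0 < 1 - t := by linarith [ht.2]
    refine ((((hasDerivAt_id t).const_sub 1).rpow_const (p := 1 - α) (Or.inl hpos.ne')
      ).const_sub _ |>.div_const _).congr_deriv ?_
    rw [id, show 1 - α - 1 = -α by ring]
    field_simp
  have hbound : ∀ t ∈ Ico r 1, ‖w * deriv F (t * w)‖ ≤ (1 - t) ^ (-α) := fun t ht => by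
    have ht0 : 0 ≤ t := hr0.trans ht.1
    rw [norm_mul]
    calc ‖w‖ * ‖deriv F (t * w)‖ ≤ 1 * (1 - t * ‖w‖) ^ (-α) := by
          gcongr
          · exact (mem_uD_iff.1 hw).le
          · simpa [norm_mul, abs_of_nonneg ht0] using hF' _ (hmem t (Ico_subset_Icc_self ht))
      _ ≤ (1 - t) ^ (-α) := by
          rw [one_mul]
          exact Real.rpow_le_rpow_of_nonpos (by linarith [ht.2])
            (by nlinarith [(mem_uD_iff.1 hw).le]) (by linarith)
  have := image_norm_le_of_norm_deriv_right_le_deriv_boundary'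
    (fun t ht => (hderiv t ht).continuousAt.continuousWithinAt)
    (fun t ht => (hderiv t (Ico_subset_Icc_self ht)).hasDerivWithinAt)
    (by simp) (by
      have := Real.continuous_rpow_const (q := 1 - α) hα.le
      fun_prop)
    (fun t ht => (hB t ht).hasDerivWithinAt) hbound (right_mem_Icc.2 hr1)
  simpa [Real.zero_rpow hα.ne'] using this

lemma norm_sub_le_of_mem_closedBall {α : ℝ} (hα0 : 0 ≤ α) {F : ℂ → ℂ}
    (hF : DifferentiableOn ℂ F uD) (hF' : ∀ y ∈ uD, ‖deriv F y‖ ≤ (1 - ‖y‖) ^ (-α))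
    {r : ℝ} (hr : r < 1) {y₁ y₂ : ℂ} (hy₁ : y₁ ∈ closedBall 0 r) (hy₂ : y₂ ∈ closedBall 0 r) :
    ‖F y₁ - F y₂‖ ≤ (1 - r) ^ (-α) * ‖y₁ - y₂‖ :=
  (convex_closedBall (0 : ℂ) r).norm_image_sub_le_of_norm_deriv_le
    (fun y hy => hF.differentiableAt (isOpen_uD.mem_nhds (closedBall_subset_uD hr hy)))
    (fun y hy => (hF' y (closedBall_subset_uD hr hy)).trans <|
      Real.rpow_le_rpow_of_nonpos (x := 1 - r) (by linarith)
        (by linarith [mem_closedBall_zero_iff.1 hy]) (by linarith)) hy₂ hy₁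

theorem norm_sub_le_mul_rpow {α : ℝ} (hα0 : 0 ≤ α) (hα1 : α < 1) {F : ℂ → ℂ}
    (hF : DifferentiableOn ℂ F uD) (hF' : ∀ y ∈ uD, ‖deriv F y‖ ≤ (1 - ‖y‖) ^ (-α))
    {z w : ℂ} (hz : z ∈ uD) (hw : w ∈ uD) :
    ‖F z - F w‖ ≤ (2 / (1 - α) + 1) * ‖z - w‖ ^ (1 - α) := by
  have hα : 0 < 1 - α := by linarith
  rcases eq_or_ne z w with rfl | hzw
  · rw [sub_self, norm_zero]
    positivity
  set d := ‖z - w‖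
  have hd0 : 0 < d := norm_pos_iff.2 (sub_ne_zero.2 hzw)
  -- compare `F z` and `F w` through `F (r z)` and `F (r w)`, with `r = 1 - d` or `r = 0`
  have hsplit : ∀ r : ℝ, ‖F z - F w‖
      ≤ ‖F z - F (r * z)‖ + ‖F (r * z) - F (r * w)‖ + ‖F w - F (r * w)‖ := fun r =>
    calc ‖F z - F w‖ = ‖(F z - F (r * z)) + (F (r * z) - F (r * w)) - (F w - F (r * w))‖ := by
          ring_nf
      _ ≤ _ := norm_sub_le_of_le (norm_add_le _ _) le_rfl
  rcases le_or_gt 1 d with hd1 | hd1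
  · have hz' := norm_sub_ofReal_mul_le hα0 hα1 hF hF' hz le_rfl zero_le_one
    have hw' := norm_sub_ofReal_mul_le hα0 hα1 hF hF' hw le_rfl zero_le_one
    calc ‖F z - F w‖ ≤ 1 / (1 - α) + 0 + 1 / (1 - α) := by
          simpa using (hsplit 0).trans (add_le_add (add_le_add hz' le_rfl) hw')
      _ ≤ (2 / (1 - α) + 1) * 1 := by
          linarith [show 2 / (1 - α) = 1 / (1 - α) + 1 / (1 - α) by ring]
      _ ≤ (2 / (1 - α) + 1) * d ^ (1 - α) := by
          gcongr
          exact Real.one_le_rpow hd1 hα.le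
  · set r := 1 - d
    have hr0 : 0 ≤ r := by linarith
    have hr1 : r < 1 := by linarith
    have h1r : 1 - r = d := by ring
    have hz' := norm_sub_ofReal_mul_le hα0 hα1 hF hF' hz hr0 hr1.le
    have hw' := norm_sub_ofReal_mul_le hα0 hα1 hF hF' hw hr0 hr1.le
    rw [h1r] at hz' hw'
    have hmem : ∀ {y : ℂ}, y ∈ uD → (r : ℂ) * y ∈ closedBall 0 r := fun hy => by
      rw [mem_closedBall_zero_iff, norm_mul, Complex.norm_of_nonneg hr0]
      exact mul_le_of_le_one_right hr0 (mem_uD_iff.1 hy).le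
    have hmid : ‖F (r * z) - F (r * w)‖ ≤ d ^ (-α) * d := by
      have := norm_sub_le_of_mem_closedBall hα0 hF hF' hr1 (hmem hz) (hmem hw)
      rw [h1r, ← mul_sub, norm_mul, Complex.norm_of_nonneg hr0] at this
      exact this.trans (by gcongr; exact mul_le_of_le_one_left hd0.le hr1.le)
    calc ‖F z - F w‖ ≤ d ^ (1 - α) / (1 - α) + d ^ (-α) * d + d ^ (1 - α) / (1 - α) :=
          (hsplit r).trans (by gcongr)
      _ = (2 / (1 - α) + 1) * d ^ (1 - α) := by
          rw [← Real.rpow_add_one hd0.ne', neg_add_eq_sub]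
          ring

lemma zygS_nonneg {a : ℝ} {f : ℂ → ℂ} {z : ℂ} (hz : z ∈ uD) : 0 ≤ zygS a f z :=
  mul_nonneg (Real.rpow_nonneg (one_sub_norm_sq_pos hz).le a) (norm_nonneg _)

lemma sSup_zygS_nonneg (a : ℝ) (f : ℂ → ℂ) : 0 ≤ sSup (zygS a f '' uD) :=
  Real.sSup_nonneg <| forall_mem_image.2 fun _ hz => zygS_nonneg hz

lemma zNorm_nonneg (a : ℝ) (f : ℂ → ℂ) : 0 ≤ zNorm a f := by
  unfold zNorm
  have := sSup_zygS_nonneg a f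
  positivity

lemma norm_apply_zero_le_zNorm (a : ℝ) (f : ℂ → ℂ) : ‖f 0‖ ≤ zNorm a f := by
  unfold zNorm
  linarith [norm_nonneg (deriv f 0), sSup_zygS_nonneg a f]

lemma norm_deriv_zero_le_zNorm (a : ℝ) (f : ℂ → ℂ) : ‖deriv f 0‖ ≤ zNorm a f := by
  unfold zNorm
  linarith [norm_nonneg (f 0), sSup_zygS_nonneg a f]

lemma zygS_le_zNorm {a : ℝ} {f : ℂ → ℂ} (hf : memZ a f) {z : ℂ} (hz : z ∈ uD) :
    zygS a f z ≤ zNorm a f := by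
  obtain ⟨M, hM⟩ := hf.2
  have := le_csSup ⟨M, forall_mem_image.2 hM⟩ (mem_image_of_mem (zygS a f) hz)
  unfold zNorm
  linarith [norm_nonneg (f 0), norm_nonneg (deriv f 0)]

lemma zNorm_le {a : ℝ} {f : ℂ → ℂ} {c₀ c₁ c₂ : ℝ} (h₀ : ‖f 0‖ ≤ c₀) (h₁ : ‖deriv f 0‖ ≤ c₁)
    (h₂ : ∀ z ∈ uD, zygS a f z ≤ c₂) : zNorm a f ≤ c₀ + c₁ + c₂ :=
  add_le_add (add_le_add h₀ h₁) <| csSup_le (nonempty_of_mem (mem_image_of_mem _ zero_mem_uD))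
    (forall_mem_image.2 h₂)

lemma memZ.differentiableOn {a : ℝ} {f : ℂ → ℂ} (hf : memZ a f) : DifferentiableOn ℂ f uD :=
  hf.1.differentiableOn

section UnitBall

variable {α : ℝ} {f : ℂ → ℂ}

lemma norm_deriv_deriv_le_of_zNorm_le_one (hα0 : 0 ≤ α) (hf : memZ α f) (hf1 : zNorm α f ≤ 1)
    {z : ℂ} (hz : z ∈ uD) : ‖deriv (deriv f) z‖ ≤ (1 - ‖z‖) ^ (-α) := by
  have hpos := one_sub_norm_sq_pos hz
  have hzyg : zygS α f z ≤ 1 := (zygS_le_zNorm hf hz).trans hf1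
  unfold zygS at hzyg
  calc ‖deriv (deriv f) z‖ ≤ (1 - ‖z‖ ^ 2) ^ (-α) := by
        rw [Real.rpow_neg hpos.le, ← one_div, le_div_iff₀ (by positivity), mul_comm]
        exact hzyg
    _ ≤ (1 - ‖z‖) ^ (-α) :=
        Real.rpow_le_rpow_of_nonpos (by linarith [mem_uD_iff.1 hz])
          (by nlinarith [norm_nonneg z, mem_uD_iff.1 hz]) (by linarith)

lemma norm_deriv_le_of_zNorm_le_one (hα0 : 0 ≤ α) (hα1 : α < 1) (hf : memZ α f)
    (hf1 : zNorm α f ≤ 1) {w : ℂ} (hw : w ∈ uD) : ‖deriv f w‖ ≤ 1 + 1 / (1 - α) := by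
  have hrad := norm_sub_ofReal_mul_le hα0 hα1 (hf.differentiableOn.deriv isOpen_uD)
    (fun y hy => norm_deriv_deriv_le_of_zNorm_le_one hα0 hf hf1 hy) hw le_rfl zero_le_one
  simp only [Complex.ofReal_zero, zero_mul, sub_zero, Real.one_rpow] at hrad
  linarith [norm_le_insert' (deriv f w) (deriv f 0), norm_deriv_zero_le_zNorm α f]

lemma norm_sub_le_of_zNorm_le_one (hα0 : 0 ≤ α) (hα1 : α < 1) (hf : memZ α f)
    (hf1 : zNorm α f ≤ 1) {z w : ℂ} (hz : z ∈ uD) (hw : w ∈ uD) :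
    ‖f z - f w‖ ≤ (1 + 1 / (1 - α)) * ‖z - w‖ :=
  convex_uD.norm_image_sub_le_of_norm_deriv_le
    (fun _ hy => hf.differentiableOn.differentiableAt (isOpen_uD.mem_nhds hy))
    (fun _ hy => norm_deriv_le_of_zNorm_le_one hα0 hα1 hf hf1 hy) hw hz

lemma norm_le_of_zNorm_le_one (hα0 : 0 ≤ α) (hα1 : α < 1) (hf : memZ α f)
    (hf1 : zNorm α f ≤ 1) {w : ℂ} (hw : w ∈ uD) : ‖f w‖ ≤ 2 + 1 / (1 - α) := by
  have hlip := norm_sub_le_of_zNorm_le_one hα0 hα1 hf hf1 hw zero_mem_uD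
  rw [sub_zero] at hlip
  have : (1 + 1 / (1 - α)) * ‖w‖ ≤ 1 + 1 / (1 - α) :=
    mul_le_of_le_one_right (by have : 0 < 1 - α := (by linarith); positivity)
      (mem_uD_iff.1 hw).le
  linarith [norm_le_insert' (f w) (f 0), norm_apply_zero_le_zNorm α f]

lemma norm_deriv_sub_le_of_zNorm_le_one (hα0 : 0 ≤ α) (hα1 : α < 1) (hf : memZ α f)
    (hf1 : zNorm α f ≤ 1) {z w : ℂ} (hz : z ∈ uD) (hw : w ∈ uD) :
    ‖deriv f z - deriv f w‖ ≤ (2 / (1 - α) + 1) * ‖z - w‖ ^ (1 - α) :=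
  norm_sub_le_mul_rpow hα0 hα1 (hf.differentiableOn.deriv isOpen_uD)
    (fun _ hy => norm_deriv_deriv_le_of_zNorm_le_one hα0 hf hf1 hy) hz hw

end UnitBall

theorem exists_strictMono_uniformCauchySeqOn_of_zNorm_le_one {α : ℝ} (hα0 : 0 ≤ α)
    (hα1 : α < 1) {u : ℕ → ℂ → ℂ} (hu : ∀ n, memZ α (u n) ∧ zNorm α (u n) ≤ 1) :
    ∃ σ : ℕ → ℕ, StrictMono σ ∧
      UniformCauchySeqOn (fun n w => (u (σ n) w, deriv (u (σ n)) w)) atTop uD := by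
  have hα : 0 < 1 - α := by linarith
  refine TotallyBounded.exists_strictMono_uniformCauchySeqOn (S := uD)
    ((isCompact_closedBall (0 : ℂ) 1).totallyBounded.subset ball_subset_closedBall)
    (isCompact_closedBall (0 : ℂ × ℂ) (2 + 1 / (1 - α)))
    (u := fun n w => (u n w, deriv (u n) w))
    (ω := fun d => (1 + 1 / (1 - α)) * d + (2 / (1 - α) + 1) * d ^ (1 - α))
    (fun n w hw => ?_) ?_ (fun n z hz w hw => ?_)
  · obtain ⟨hf, hf1⟩ := hu n
    rw [mem_closedBall_zero_iff, Prod.norm_def]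
    refine max_le (norm_le_of_zNorm_le_one hα0 hα1 hf hf1 hw) <|
      (norm_deriv_le_of_zNorm_le_one hα0 hα1 hf hf1 hw).trans (by linarith)
  · have : Continuous fun d : ℝ => (1 + 1 / (1 - α)) * d + (2 / (1 - α) + 1) * d ^ (1 - α) := by
      have := Real.continuous_rpow_const hα.le
      fun_prop
    simpa [Real.zero_rpow hα.ne'] using this.tendsto 0
  · obtain ⟨hf, hf1⟩ := hu n
    rw [Prod.dist_eq, dist_eq_norm, dist_eq_norm, dist_eq_norm]
    have h₀ : 0 ≤ (1 + 1 / (1 - α)) * ‖z - w‖ := by positivity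
    have h₁ : 0 ≤ (2 / (1 - α) + 1) * ‖z - w‖ ^ (1 - α) := by positivity
    exact max_le (by linarith [norm_sub_le_of_zNorm_le_one hα0 hα1 hf hf1 hz hw])
      (by linarith [norm_deriv_sub_le_of_zNorm_le_one hα0 hα1 hf hf1 hz hw])

lemma integral_mul_comp_ofReal_mul_eq_sub {F P : ℂ → ℂ} (hF : ContinuousOn F uD)
    (hP : ∀ z ∈ uD, HasDerivAt P (F z) z) {w : ℂ} (hw : w ∈ uD) :
    ∫ t in (0 : ℝ)..1, w * F (t * w) = P w - P 0 := by
  have hmem : ∀ t ∈ uIcc (0 : ℝ) 1, (t : ℂ) * w ∈ uD := fun t ht => by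
    rw [uIcc_of_le zero_le_one] at ht
    exact ofReal_mul_mem_uD ht.1 ht.2 hw
  have hderiv : ∀ t ∈ uIcc (0 : ℝ) 1,
      HasDerivAt (fun s : ℝ => P (s * w)) (w * F (t * w)) t := fun t ht =>
    (hP _ (hmem t ht)).comp_ofReal_mul_const
  have hcont : ContinuousOn (fun t : ℝ => w * F (t * w)) (uIcc 0 1) :=
    continuousOn_const.mul (hF.comp (by fun_prop) hmem)
  simpa using intervalIntegral.integral_eq_sub_of_hasDerivAt hderiv hcont.intervalIntegrable

section CphiUg

variable {g φ : ℂ → ℂ}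

lemma intervalIntegrable_CphiUg_integrand (hg : DifferentiableOn ℂ g uD) {f : ℂ → ℂ}
    (hf : ContinuousOn f uD) {w : ℂ} (hw : w ∈ uD) :
    IntervalIntegrable (fun t : ℝ => w * (f (t * w) * deriv g (t * w)))
      MeasureTheory.volume 0 1 := by
  refine ContinuousOn.intervalIntegrable (continuousOn_const.mul ?_)
  refine (hf.mul (hg.deriv isOpen_uD).continuousOn).comp (by fun_prop) fun t ht => ?_
  rw [uIcc_of_le zero_le_one] at ht
  exact ofReal_mul_mem_uD ht.1 ht.2 hw

lemma CphiUg_add (hg : DifferentiableOn ℂ g uD) {f h : ℂ → ℂ} (hf : ContinuousOn f uD)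
    (hh : ContinuousOn h uD) {z : ℂ} (hz : φ z ∈ uD) :
    CphiUg g φ (f + h) z = CphiUg g φ f z + CphiUg g φ h z := by
  rw [CphiUg, CphiUg, CphiUg, ← intervalIntegral.integral_add
    (intervalIntegrable_CphiUg_integrand hg hf hz) (intervalIntegrable_CphiUg_integrand hg hh hz)]
  congr 1 with t
  simp only [Pi.add_apply]
  ring

lemma CphiUg_sub (hg : DifferentiableOn ℂ g uD) {f h : ℂ → ℂ} (hf : ContinuousOn f uD)
    (hh : ContinuousOn h uD) {z : ℂ} (hz : φ z ∈ uD) :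
    CphiUg g φ (f - h) z = CphiUg g φ f z - CphiUg g φ h z := by
  rw [CphiUg, CphiUg, CphiUg, ← intervalIntegral.integral_sub
    (intervalIntegrable_CphiUg_integrand hg hf hz) (intervalIntegrable_CphiUg_integrand hg hh hz)]
  congr 1 with t
  simp only [Pi.sub_apply]
  ring

lemma CphiUg_smul (c : ℂ) (f : ℂ → ℂ) (z : ℂ) : CphiUg g φ (c • f) z = c * CphiUg g φ f z := by
  rw [CphiUg, CphiUg, ← intervalIntegral.integral_const_mul]
  congr 1 with t
  simp only [Pi.smul_apply, smul_eq_mul]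
  ring

theorem exists_eqOn_CphiUg_sub (hg : DifferentiableOn ℂ g uD) (hφm : MapsTo φ uD uD)
    {f : ℂ → ℂ} (hf : DifferentiableOn ℂ f uD) :
    ∃ P : ℂ → ℂ, (∀ z ∈ uD, HasDerivAt P (f z * deriv g z) z) ∧
      EqOn (CphiUg g φ f) (fun z => P (φ z) - P 0) uD := by
  have hF : DifferentiableOn ℂ (fun z => f z * deriv g z) uD := hf.mul (hg.deriv isOpen_uD)
  obtain ⟨P, hP⟩ := hF.isExactOn_ball
  exact ⟨P, hP, fun z hz => integral_mul_comp_ofReal_mul_eq_sub hF.continuousOn hP (hφm hz)⟩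

lemma hasDerivAt_CphiUg (hφ : DifferentiableOn ℂ φ uD) (hφm : MapsTo φ uD uD)
    (hg : DifferentiableOn ℂ g uD) {f : ℂ → ℂ} (hf : DifferentiableOn ℂ f uD) {z : ℂ}
    (hz : z ∈ uD) :
    HasDerivAt (CphiUg g φ f) (f (φ z) * deriv g (φ z) * deriv φ z) z := by
  obtain ⟨P, hP, hT⟩ := exists_eqOn_CphiUg_sub hg hφm hf
  exact (((hP _ (hφm hz)).comp z (hφ.hasDerivAt (isOpen_uD.mem_nhds hz))).sub_const (P 0)
    ).congr_of_eventuallyEq (hT.eventuallyEq_of_mem (isOpen_uD.mem_nhds hz))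

theorem deriv_deriv_CphiUg (hφ : DifferentiableOn ℂ φ uD) (hφm : MapsTo φ uD uD)
    (hg : DifferentiableOn ℂ g uD) {f : ℂ → ℂ} (hf : DifferentiableOn ℂ f uD) {z : ℂ}
    (hz : z ∈ uD) :
    deriv (deriv (CphiUg g φ f)) z
      = (deriv f (φ z) * deriv g (φ z) + f (φ z) * deriv (deriv g) (φ z)) * deriv φ z ^ 2
        + f (φ z) * deriv g (φ z) * deriv (deriv φ) z := by
  have hT' : deriv (CphiUg g φ f) =ᶠ[𝓝 z] fun y => f (φ y) * deriv g (φ y) * deriv φ y :=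
    eventually_of_mem (isOpen_uD.mem_nhds hz) fun y hy =>
      (hasDerivAt_CphiUg hφ hφm hg hf hy).deriv
  have hat : ∀ {F : ℂ → ℂ}, DifferentiableOn ℂ F uD → ∀ {y}, y ∈ uD → HasDerivAt F (deriv F y) y :=
    fun hF _ hy => hF.hasDerivAt (isOpen_uD.mem_nhds hy)
  have hφz := hat hφ hz
  have hprod : HasDerivAt (fun y => f (φ y) * deriv g (φ y) * deriv φ y) _ z :=
    (((hat hf (hφm hz)).comp z hφz).mul ((hat (hg.deriv isOpen_uD) (hφm hz)).comp z hφz)).mul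
      (hat (hφ.deriv isOpen_uD) hz)
  rw [hT'.deriv_eq, hprod.deriv]
  simp only [Function.comp_apply, Pi.mul_apply]
  ring

theorem deriv_deriv_CphiUg_eq (hφ : DifferentiableOn ℂ φ uD) (hφm : MapsTo φ uD uD)
    (hg : DifferentiableOn ℂ g uD) {f : ℂ → ℂ} (hf : DifferentiableOn ℂ f uD) {z : ℂ}
    (hz : z ∈ uD) :
    deriv (deriv (CphiUg g φ f)) z
      = deriv f (φ z) * (deriv (deriv (CphiUg g φ id)) z
          - φ z * deriv (deriv (CphiUg g φ 1)) z)
        + f (φ z) * deriv (deriv (CphiUg g φ 1)) z := by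
  rw [deriv_deriv_CphiUg hφ hφm hg hf hz,
    deriv_deriv_CphiUg hφ hφm hg differentiableOn_id hz,
    deriv_deriv_CphiUg hφ hφm hg (f := 1) (differentiableOn_const 1) hz]
  simp only [deriv_id, id, Pi.one_apply, Pi.one_def, deriv_const']
  ring

lemma zygS_CphiUg_le {β : ℝ} (hφ : DifferentiableOn ℂ φ uD) (hφm : MapsTo φ uD uD)
    (hg : DifferentiableOn ℂ g uD) (hT1 : memZ β (CphiUg g φ 1))
    (hTid : memZ β (CphiUg g φ id)) {f : ℂ → ℂ} (hf : DifferentiableOn ℂ f uD) {S : ℝ}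
    (h₀ : ∀ w ∈ uD, ‖f w‖ ≤ S) (h₁ : ∀ w ∈ uD, ‖deriv f w‖ ≤ S) {z : ℂ} (hz : z ∈ uD) :
    zygS β (CphiUg g φ f) z ≤ S * (zNorm β (CphiUg g φ id) + 2 * zNorm β (CphiUg g φ 1)) := by
  set A := deriv (deriv (CphiUg g φ id)) z
  set B := deriv (deriv (CphiUg g φ 1)) z
  have hS : 0 ≤ S := (norm_nonneg _).trans (h₀ 0 zero_mem_uD)
  have hA : (1 - ‖z‖ ^ 2) ^ β * ‖A‖ ≤ zNorm β (CphiUg g φ id) := zygS_le_zNorm hTid hz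
  have hB : (1 - ‖z‖ ^ 2) ^ β * ‖B‖ ≤ zNorm β (CphiUg g φ 1) := zygS_le_zNorm hT1 hz
  have hφB : ‖φ z * B‖ ≤ ‖B‖ :=
    (norm_mul_le _ _).trans (mul_le_of_le_one_left (norm_nonneg B) (mem_uD_iff.1 (hφm hz)).le)
  have hnorm : ‖deriv f (φ z) * (A - φ z * B) + f (φ z) * B‖ ≤ S * (‖A‖ + ‖B‖) + S * ‖B‖ := by
    refine (norm_add_le _ _).trans (add_le_add ?_ ?_) <;> rw [norm_mul]
    · exact mul_le_mul (h₁ _ (hφm hz)) ((norm_sub_le _ _).trans (by linarith)) (norm_nonneg _) hS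
    · exact mul_le_mul_of_nonneg_right (h₀ _ (hφm hz)) (norm_nonneg _)
  have hw : 0 ≤ (1 - ‖z‖ ^ 2) ^ β := Real.rpow_nonneg (one_sub_norm_sq_pos hz).le β
  calc zygS β (CphiUg g φ f) z
      = (1 - ‖z‖ ^ 2) ^ β * ‖deriv f (φ z) * (A - φ z * B) + f (φ z) * B‖ := by
        rw [zygS, deriv_deriv_CphiUg_eq hφ hφm hg hf hz]
    _ ≤ (1 - ‖z‖ ^ 2) ^ β * (S * (‖A‖ + ‖B‖) + S * ‖B‖) := by gcongr
    _ = S * ((1 - ‖z‖ ^ 2) ^ β * ‖A‖ + 2 * ((1 - ‖z‖ ^ 2) ^ β * ‖B‖)) := by ring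
    _ ≤ S * (zNorm β (CphiUg g φ id) + 2 * zNorm β (CphiUg g φ 1)) := by gcongr

theorem exists_zNorm_CphiUg_le {β : ℝ} (hφ : DifferentiableOn ℂ φ uD) (hφm : MapsTo φ uD uD)
    (hg : DifferentiableOn ℂ g uD) (hT1 : memZ β (CphiUg g φ 1))
    (hTid : memZ β (CphiUg g φ id)) :
    ∃ C, ∀ f : ℂ → ℂ, DifferentiableOn ℂ f uD → ∀ S : ℝ, (∀ w ∈ uD, ‖f w‖ ≤ S) →
      (∀ w ∈ uD, ‖deriv f w‖ ≤ S) → zNorm β (CphiUg g φ f) ≤ C * S := by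
  have hφ0 : φ 0 ∈ uD := hφm zero_mem_uD
  obtain ⟨M, hM⟩ := (isCompact_closedBall (0 : ℂ) ‖φ 0‖).exists_bound_of_continuousOn
    ((hg.deriv isOpen_uD).continuousOn.mono (closedBall_subset_uD (mem_uD_iff.1 hφ0)))
  refine ⟨M + ‖deriv g (φ 0) * deriv φ 0‖ + (zNorm β (CphiUg g φ id)
    + 2 * zNorm β (CphiUg g φ 1)), fun f hf S h₀ h₁ => ?_⟩
  have hS : 0 ≤ S := (norm_nonneg _).trans (h₀ 0 zero_mem_uD)
  rw [add_mul, add_mul]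
  refine zNorm_le ?_ ?_ fun z hz => ?_
  · have hbound : ∀ t ∈ uIoc (0 : ℝ) 1,
        ‖φ 0 * (f (t * φ 0) * deriv g (t * φ 0))‖ ≤ M * S := fun t ht => by
      rw [uIoc_of_le zero_le_one] at ht
      have htφ : (t : ℂ) * φ 0 ∈ closedBall 0 ‖φ 0‖ := by
        rw [mem_closedBall_zero_iff, norm_mul, Complex.norm_of_nonneg ht.1.le]
        exact mul_le_of_le_one_left (norm_nonneg _) ht.2
      rw [norm_mul, norm_mul]
      calc ‖φ 0‖ * (‖f (t * φ 0)‖ * ‖deriv g (t * φ 0)‖) ≤ 1 * (S * M) := by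
            gcongr
            · exact (mem_uD_iff.1 hφ0).le
            · exact h₀ _ (ofReal_mul_mem_uD ht.1.le ht.2 hφ0)
            · exact hM _ htφ
        _ = M * S := by ring
    simpa [CphiUg] using intervalIntegral.norm_integral_le_of_norm_le_const hbound
  · rw [(hasDerivAt_CphiUg hφ hφm hg hf zero_mem_uD).deriv, mul_assoc, norm_mul, mul_comm]
    exact mul_le_mul_of_nonneg_left (h₀ _ hφ0) (norm_nonneg _)
  · rw [mul_comm]
    exact zygS_CphiUg_le hφ hφm hg hT1 hTid hf h₀ h₁ hz

end CphiUg

section Congr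

variable {a : ℝ} {F G : ℂ → ℂ}

lemma deriv_eqOn_of_eqOn (h : EqOn F G uD) : EqOn (deriv F) (deriv G) uD := fun _ hz =>
  (h.eventuallyEq_of_mem (isOpen_uD.mem_nhds hz)).deriv_eq

lemma zygS_eqOn_of_eqOn (h : EqOn F G uD) : EqOn (zygS a F) (zygS a G) uD := fun z hz => by
  rw [zygS, zygS, deriv_eqOn_of_eqOn (deriv_eqOn_of_eqOn h) hz]

lemma zNorm_congr (h : EqOn F G uD) : zNorm a F = zNorm a G := by
  rw [zNorm, zNorm, h zero_mem_uD, deriv_eqOn_of_eqOn h zero_mem_uD,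
    (zygS_eqOn_of_eqOn h).image_eq]

lemma memZ.congr (hF : memZ a F) (h : EqOn F G uD) : memZ a G := by
  obtain ⟨hFa, M, hM⟩ := hF
  exact ⟨hFa.congr h.symm, M, fun z hz => zygS_eqOn_of_eqOn h hz ▸ hM z hz⟩

end Congr

lemma zNorm_zero (a : ℝ) : zNorm a 0 = 0 := by
  have h : zygS a 0 = fun _ => 0 := funext fun _ => by simp [zygS]
  simp [zNorm, h, (nonempty_of_mem zero_mem_uD).image_const]

lemma memZ_zero (a : ℝ) : memZ a 0 := ⟨analyticOn_const, 0, fun _ _ => by simp [zygS]⟩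

lemma memZ_one (a : ℝ) : memZ a 1 := ⟨analyticOn_const, 0, fun _ _ => by simp [zygS]⟩

lemma memZ_id (a : ℝ) : memZ a id := ⟨analyticOn_id, 0, fun _ _ => by simp [zygS]⟩

theorem essNormZ_eq_zero {a b : ℝ} {T K : (ℂ → ℂ) → ℂ → ℂ} (hK : compactOpZ a b K)
    (hTK : ∀ f, memZ a f → EqOn (T f) (K f) uD) : essNormZ a b T = 0 := by
  have hzero : ∀ f, memZ a f → zNorm b (fun z => T f z - K f z) = 0 := fun f hf =>
    (zNorm_congr fun z hz => sub_eq_zero.2 (hTK f hf hz)).trans (zNorm_zero b)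
  have hop : opNormZ a b (fun f z => T f z - K f z) = 0 := by
    suffices {r : ℝ | ∃ f, memZ a f ∧ zNorm a f ≤ 1 ∧ r = zNorm b (fun z => T f z - K f z)}
        = {0} by rw [opNormZ, this, csSup_singleton]
    refine eq_singleton_iff_unique_mem.2
      ⟨⟨0, memZ_zero a, by simp [zNorm_zero], (hzero 0 (memZ_zero a)).symm⟩, ?_⟩
    rintro _ ⟨f, hf, -, rfl⟩
    exact hzero f hf
  have hlb : ∀ r ∈ {r : ℝ | ∃ K, compactOpZ a b K ∧ r = opNormZ a b (fun f z => T f z - K f z)},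
      0 ≤ r := by
    rintro _ ⟨K, -, rfl⟩
    exact Real.sSup_nonneg (fun _ ⟨f, _, _, hr⟩ => hr ▸ zNorm_nonneg b _)
  exact le_antisymm (csInf_le ⟨0, hlb⟩ ⟨K, hK, hop.symm⟩) (le_csInf ⟨0, K, hK, hop.symm⟩ hlb)

lemma zNorm_indicator_CphiUg_sub_le {β : ℝ} {g φ : ℂ → ℂ} (hφm : MapsTo φ uD uD)
    (hg : DifferentiableOn ℂ g uD) {C : ℝ}
    (hC : ∀ f : ℂ → ℂ, DifferentiableOn ℂ f uD → ∀ S : ℝ, (∀ w ∈ uD, ‖f w‖ ≤ S) →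
      (∀ w ∈ uD, ‖deriv f w‖ ≤ S) → zNorm β (CphiUg g φ f) ≤ C * S)
    {p q : ℂ → ℂ} (hp : DifferentiableOn ℂ p uD) (hq : DifferentiableOn ℂ q uD) {S : ℝ}
    (h₀ : ∀ w ∈ uD, ‖p w - q w‖ ≤ S) (h₁ : ∀ w ∈ uD, ‖deriv p w - deriv q w‖ ≤ S) :
    zNorm β (fun z => uD.indicator (CphiUg g φ p) z - uD.indicator (CphiUg g φ q) z) ≤ C * S := by
  have hderiv : ∀ w ∈ uD, deriv (p - q) w = deriv p w - deriv q w := fun w hw =>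
    deriv_sub (hp.differentiableAt (isOpen_uD.mem_nhds hw))
      (hq.differentiableAt (isOpen_uD.mem_nhds hw))
  calc _ = zNorm β (CphiUg g φ (p - q)) := zNorm_congr fun z hz => by
        simp only [indicator_of_mem hz]
        exact (CphiUg_sub hg hp.continuousOn hq.continuousOn (hφm hz)).symm
    _ ≤ C * S := hC _ (hp.sub hq) _ h₀ fun w hw => hderiv w hw ▸ h₁ w hw

/- Off `uD` the integrals defining `CphiUg g φ f` need not exist, so additivity can fail there;
cutting the operator off outside `uD` changes nothing that `memZ` or `zNorm` can see. -/
theorem compactOpZ_indicator_CphiUg {α β : ℝ} {g φ : ℂ → ℂ} (hα0 : 0 ≤ α) (hα1 : α < 1)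
    (hφ : DifferentiableOn ℂ φ uD) (hφm : MapsTo φ uD uD) (hg : DifferentiableOn ℂ g uD)
    (hmaps : ∀ f, memZ α f → memZ β (CphiUg g φ f)) :
    compactOpZ α β fun f => uD.indicator (CphiUg g φ f) := by
  refine ⟨fun f hf => (hmaps f hf).congr fun z hz => (indicator_of_mem hz _).symm,
    fun f h hf hh => ?_, fun c f _ => ?_, fun u hu => ?_⟩
  · rw [← indicator_add']
    exact indicator_congr fun z hz =>
      CphiUg_add hg hf.differentiableOn.continuousOn hh.differentiableOn.continuousOn (hφm hz)
  · funext z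
    show uD.indicator (CphiUg g φ (c • f)) z = c • uD.indicator (CphiUg g φ f) z
    rw [← indicator_const_smul_apply, funext (CphiUg_smul c f)]
    rfl
  obtain ⟨C, hC⟩ := exists_zNorm_CphiUg_le hφ hφm hg (hmaps 1 (memZ_one α))
    (hmaps id (memZ_id α))
  obtain ⟨σ, hσ, hcauchy⟩ := exists_strictMono_uniformCauchySeqOn_of_zNorm_le_one hα0 hα1 hu
  refine ⟨σ, hσ, fun ε hε => ?_⟩
  obtain ⟨N, hN⟩ := Metric.uniformCauchySeqOn_iff.1 hcauchy (ε / (|C| + 1)) (by positivity)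
  refine ⟨N, fun m hm n hn => ?_⟩
  have hdist : ∀ w ∈ uD, ‖u (σ m) w - u (σ n) w‖ ≤ ε / (|C| + 1) ∧
      ‖deriv (u (σ m)) w - deriv (u (σ n)) w‖ ≤ ε / (|C| + 1) := fun w hw => by
    have := (hN m hm n hn w hw).le
    rwa [Prod.dist_eq, max_le_iff, dist_eq_norm, dist_eq_norm] at this
  calc _ ≤ C * (ε / (|C| + 1)) := zNorm_indicator_CphiUg_sub_le hφm hg hC
        (hu (σ m)).1.differentiableOn (hu (σ n)).1.differentiableOn
        (fun w hw => (hdist w hw).1) (fun w hw => (hdist w hw).2)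
    _ ≤ ε := by
        rw [mul_div_assoc', div_le_iff₀ (by positivity)]
        nlinarith [le_abs_self C]

theorem stmt_19_general (α β : ℝ) (hα0 : 0 < α) (hα1 : α < 1)
    (φ g : ℂ → ℂ) (hφ : AnalyticOn ℂ φ uD) (hφm : Set.MapsTo φ uD uD)
    (hg : AnalyticOn ℂ g uD)
    (hbdd : boundedOp α β (CphiUg g φ)) :
    essNormZ α β (CphiUg g φ) = 0 :=
  essNormZ_eq_zero (compactOpZ_indicator_CphiUg hα0.le hα1 hφ.differentiableOn hφm
    hg.differentiableOn hbdd.1) fun _ _ _ hz => (indicator_of_mem hz _).symm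

theorem stmt_19 (α β : ℝ) (hα0 : 0 < α) (hα1 : α < 1) (hβ : 0 < β)
    (φ g : ℂ → ℂ) (hφ : AnalyticOn ℂ φ uD) (hφm : Set.MapsTo φ uD uD)
    (hg : AnalyticOn ℂ g uD)
    (hbdd : boundedOp α β (CphiUg g φ)) :
    essNormZ α β (CphiUg g φ) = 0 :=
  stmt_19_general α β hα0 hα1 φ g hφ hφm hg hbdd
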